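/- arXiv:1705.02828 — 2 statements merged into one kernel-verified Lean document; each statement's English description precedes it below -/
import Mathlib

section
/- Let x₁, x₂ be nonzero vectors in a real inner product space whose common angle φ(x₁,x₂) = arccos(⟨x₁,x₂⟩/(‖x₁‖·‖x₂‖)) is strictly less than π/3, i.e. ⟨x₁, x₂⟩ > (1/2)·‖x₁‖·‖x₂‖. Then ‖x₁ − x₂‖ < max{‖x₁‖, ‖x₂‖}; in particular min{‖x₁ − x₂‖, ‖x₁ + x₂‖} < max{‖x₁‖, ‖x₂‖}, so combining the two vectors yields a strictly shorter vector. -/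
theorem reduction_of_small_angle {E : Type*} [NormedAddCommGroup E]
    [InnerProductSpace ℝ E] (x₁ x₂ : E) (hx₁ : x₁ ≠ 0) (hx₂ : x₂ ≠ 0)
    (h : (1 / 2 : ℝ) * ‖x₁‖ * ‖x₂‖ < inner ℝ x₁ x₂) :
    ‖x₁ - x₂‖ < max ‖x₁‖ ‖x₂‖ ∧
      min ‖x₁ - x₂‖ ‖x₁ + x₂‖ < max ‖x₁‖ ‖x₂‖ := by
  have hsq : ‖x₁ - x₂‖ ^ 2 = ‖x₁‖ ^ 2 - 2 * inner ℝ x₁ x₂ + ‖x₂‖ ^ 2 := by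
    rw [@norm_sub_sq_real]
  have h1 : ‖x₁‖ ≠ 0 := norm_ne_zero_iff.mpr hx₁
  have h2 : ‖x₂‖ ≠ 0 := norm_ne_zero_iff.mpr hx₂
  have hp1 : 0 < ‖x₁‖ := (norm_pos_iff).mpr hx₁
  have hp2 : 0 < ‖x₂‖ := (norm_pos_iff).mpr hx₂
  have hmax : ‖x₁ - x₂‖ ^ 2 < (max ‖x₁‖ ‖x₂‖) ^ 2 := by
    rcases le_total ‖x₁‖ ‖x₂‖ with hle | hle
    · rw [max_eq_right hle]; nlinarith
    · rw [max_eq_left hle]; nlinarith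
  have key : ‖x₁ - x₂‖ < max ‖x₁‖ ‖x₂‖ := by
    have := lt_of_pow_lt_pow_left₀ 2 (le_max_of_le_left hp1.le) hmax
    exact this
  exact ⟨key, lt_of_le_of_lt (min_le_left _ _) key⟩
end

section
/- Let θ ∈ (0, π/2) and β ≥ 0 be fixed. Then the update exponent ρ_u(c, θ, β) = log(1 − (1−c)·(1 + β² − 2β·cos θ)/sin²θ)/log(c) − 1 tends to (β − cos θ)²/sin²θ as c → 1 from below. I.e., in the sparse-data limit n^{1/d} → 1 the spherical filter update exponent converges to (β − cos θ)²/sin²θ. -/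
open Real Filter

/-- The update exponent of the spherical locality-sensitive filter data structure. -/
noncomputable def rhoU (c θ β : ℝ) : ℝ :=
  Real.log (1 - (1 - c) * (1 + β ^ 2 - 2 * β * Real.cos θ) / Real.sin θ ^ 2) /
    Real.log c - 1

theorem update_exponent_sparse_limit (θ β : ℝ) (hθ : θ ∈ Set.Ioo 0 (π / 2))
    (hβ : 0 ≤ β) :
    Tendsto (fun c : ℝ => rhoU c θ β) (nhdsWithin 1 (Set.Iio 1))
      (nhds ((β - Real.cos θ) ^ 2 / Real.sin θ ^ 2)) := by
  obtain ⟨hθ0, hθ1⟩ := hθ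
  have hθpi : θ < π := lt_trans hθ1 (by linarith [Real.pi_pos])
  have hs : 0 < Real.sin θ := Real.sin_pos_of_pos_of_lt_pi hθ0 hθpi
  have hs2 : (0:ℝ) < Real.sin θ ^ 2 := by positivity
  have hpy := Real.sin_sq_add_cos_sq θ
  set K : ℝ := (1 + β ^ 2 - 2 * β * Real.cos θ) / Real.sin θ ^ 2 with hKdef
  have hNpos : 0 < 1 + β ^ 2 - 2 * β * Real.cos θ := by
    nlinarith [sq_nonneg (β - Real.cos θ)]
  have hK : 0 < K := div_pos hNpos hs2
  -- derivative facts
  have hinner : HasDerivAt (fun c : ℝ => 1 - (1 - c) * K) K 1 := by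
    simpa using (((hasDerivAt_id (1:ℝ)).const_sub 1).mul_const K).const_sub 1
  have hg : HasDerivAt (fun c : ℝ => Real.log (1 - (1 - c) * K)) K 1 := by
    have := hinner.log (by norm_num)
    simpa using this
  have hlog : HasDerivAt Real.log 1 1 := by
    simpa using Real.hasDerivAt_log one_ne_zero
  have hA : Tendsto (fun c : ℝ => Real.log (1 - (1 - c) * K) / (c - 1))
      (nhdsWithin 1 {(1:ℝ)}ᶜ) (nhds K) := by
    have h := hasDerivAt_iff_tendsto_slope.mp hg
    refine h.congr fun c => ?_
    simp [slope_def_field]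
  have hB : Tendsto (fun c : ℝ => Real.log c / (c - 1))
      (nhdsWithin 1 {(1:ℝ)}ᶜ) (nhds 1) := by
    have h := hasDerivAt_iff_tendsto_slope.mp hlog
    refine h.congr fun c => ?_
    simp [slope_def_field]
  have hmono : nhdsWithin (1:ℝ) (Set.Iio 1) ≤ nhdsWithin 1 {(1:ℝ)}ᶜ :=
    nhdsWithin_mono _ (fun x hx => ne_of_lt hx)
  have hdiv : Tendsto
      (fun c : ℝ => (Real.log (1 - (1 - c) * K) / (c - 1)) / (Real.log c / (c - 1)))
      (nhdsWithin 1 (Set.Iio 1)) (nhds (K / 1)) :=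
    (hA.mono_left hmono).div (hB.mono_left hmono) one_ne_zero
  have hratio : Tendsto (fun c : ℝ => Real.log (1 - (1 - c) * K) / Real.log c)
      (nhdsWithin 1 (Set.Iio 1)) (nhds K) := by
    rw [div_one] at hdiv
    refine hdiv.congr' ?_
    filter_upwards [self_mem_nhdsWithin] with c hc
    have hne : c - 1 ≠ 0 := sub_ne_zero.mpr (ne_of_lt hc)
    rw [div_div_div_comm, div_self hne, div_one]
  have hconst : (β - Real.cos θ) ^ 2 / Real.sin θ ^ 2 = K - 1 := by
    rw [hKdef]
    field_simp
    nlinarith [hpy]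
  rw [hconst]
  have : Tendsto (fun c : ℝ => Real.log (1 - (1 - c) * K) / Real.log c - 1)
      (nhdsWithin 1 (Set.Iio 1)) (nhds (K - 1)) := hratio.sub_const 1
  refine this.congr (fun c => ?_)
  simp only [rhoU, hKdef]
  rw [mul_div_assoc]
end
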